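/- For any string u that is closed with a nonempty longest border, and for any string S containing u: if |u| > |lrs(S)|, then |bord(u)| > |lrs²(S)| provided u is a suffix of S. More precisely: if u is a closed suffix of S with |u| > |lrs(S)|, then |bord(u)| > |lrs(lrs(S))|. -/

import Mathlib

variable {α : Type*} [DecidableEq α]

/-- Number of occurrences of `s` as a factor of `w` (starting positions, 0-indexed). -/
def countOcc (s w : List α) : ℕ :=
  ((Finset.range (w.length + 1)).filter (fun i => s <+: w.drop i)).card

/-- `b` is a border of `w`. -/
def IsBorder (b w : List α) : Prop := b ≠ w ∧ b <+: w ∧ b <:+ w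

/-- The longest border of `w`. -/
def bord (w : List α) : List α :=
  w.take (((Finset.range w.length).filter (fun k => w.take k <:+ w)).sup id)

/-- A string is closed if its length is one, or it has a nonempty border occurring
exactly twice in it. -/
def IsClosedStr (w : List α) : Prop :=
  w.length = 1 ∨ ∃ b : List α, b ≠ [] ∧ IsBorder b w ∧ countOcc b w = 2

/-- The longest repeating suffix of `w` (the empty string if none). -/
def lrs (w : List α) : List α :=
  w.drop (w.length -
    ((Finset.range (w.length + 1)).filter
      (fun k => 2 ≤ countOcc (w.drop (w.length - k)) w)).sup id)

/-- `u` is a factor (contiguous substring) of `w`. -/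
def IsFactor (u w : List α) : Prop := ∃ s t : List α, w = s ++ u ++ t

/-- The set of all factors of `w`. -/
def factors (w : List α) : Finset (List α) :=
  (Finset.range (w.length + 1) ×ˢ Finset.range (w.length + 1)).image
    (fun p => (w.drop p.1).take p.2)

/-- The set of distinct closed factors of `w`. -/
noncomputable def closedFactors (w : List α) : Finset (List α) :=
  @Finset.filter _ IsClosedStr (Classical.decPred _) (factors w)

/-!
Let `b = bord u` and `L = lrs S`. Closedness of `u` forces `b` to occur at most twice in `u`.
If `|lrs L| ≥ |b|`, then `b` is a suffix of `lrs L`, hence occurs at least twice in `L`.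
Since `L` is a proper suffix of `u` and `b` is a prefix of `u`, the two occurrences in `L`
together with the one at the start of `u` give three occurrences of `b` in `u`.
-/

theorem Finset.sup_id_mem_of_ne_zero {s : Finset ℕ} (h : s.sup id ≠ 0) : s.sup id ∈ s := by
  obtain rfl | hs := s.eq_empty_or_nonempty
  · exact absurd rfl h
  · obtain ⟨k, hk, hsup⟩ := s.exists_mem_eq_sup hs id
    exact hsup ▸ hk

section Occurrences

variable {s t v u w : List α}

def occPositions (s w : List α) : Finset ℕ :=
  (Finset.range (w.length + 1)).filter (fun i => s <+: w.drop i)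

theorem countOcc_eq_card_occPositions : countOcc s w = (occPositions s w).card := rfl

theorem mem_occPositions {i : ℕ} : i ∈ occPositions s w ↔ i ≤ w.length ∧ s <+: w.drop i := by
  simp [occPositions]

theorem countOcc_le_of_prefix (h : s <+: t) : countOcc t w ≤ countOcc s w := by
  simp only [countOcc_eq_card_occPositions]
  refine Finset.card_le_card fun i hi => ?_
  obtain ⟨hiw, hti⟩ := mem_occPositions.mp hi
  exact mem_occPositions.mpr ⟨hiw, h.trans hti⟩

theorem countOcc_le_of_suffix (h : s <:+ t) : countOcc t w ≤ countOcc s w := by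
  simp only [countOcc_eq_card_occPositions]
  refine Finset.card_le_card_of_injOn (· + (t.length - s.length)) (fun i hi => ?_)
    (fun _ _ _ _ => Nat.add_right_cancel)
  obtain ⟨hiw, r, hr⟩ := mem_occPositions.mp hi
  have hst : s.length ≤ t.length := h.length_le
  have hfit : i + t.length ≤ w.length := by
    have := congrArg List.length hr
    simp only [List.length_append, List.length_drop] at this
    omega
  refine mem_occPositions.mpr ⟨show i + _ ≤ _ by omega, r, ?_⟩
  rw [← List.drop_drop, ← hr, List.drop_append_of_le_length (by omega),
    ← List.suffix_iff_eq_drop.mp h]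

/-- Occurrences of `s` in `u` shift to occurrences in `v ++ u`, and a prefix `s` of `v ++ u`
contributes one more at position `0` when `v ≠ []`. -/
theorem countOcc_lt_countOcc_append (hv : v ≠ []) (hs : s <+: v ++ u) :
    countOcc s u < countOcc s (v ++ u) := by
  simp only [countOcc_eq_card_occPositions]
  have hv : 0 < v.length := List.length_pos_iff.mpr hv
  have hshift : (occPositions s u).image (v.length + ·) ⊆ occPositions s (v ++ u) := by
    intro j hj
    obtain ⟨i, hi, rfl⟩ := Finset.mem_image.mp hj
    obtain ⟨hiu, hsi⟩ := mem_occPositions.mp hi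
    refine mem_occPositions.mpr ⟨by simp; omega, ?_⟩
    rwa [← List.drop_drop, List.drop_left]
  have hzero : 0 ∉ (occPositions s u).image (v.length + ·) := by
    simp only [Finset.mem_image, not_exists, not_and]
    intro i _
    omega
  calc (occPositions s u).card
      = ((occPositions s u).image (v.length + ·)).card :=
        (Finset.card_image_of_injective _ (add_right_injective _)).symm
    _ < (insert 0 ((occPositions s u).image (v.length + ·))).card :=
        Finset.card_lt_card (Finset.ssubset_insert hzero)
    _ ≤ (occPositions s (v ++ u)).card :=
        Finset.card_le_card (Finset.insert_subset (mem_occPositions.mpr ⟨by omega, hs⟩) hshift)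

end Occurrences

section Borders

variable {b w : List α}

theorem bord_prefix (w : List α) : bord w <+: w := List.take_prefix _ _

theorem bord_suffix (w : List α) : bord w <:+ w := by
  by_cases h : ((Finset.range w.length).filter (fun k => w.take k <:+ w)).sup id = 0
  · simp [bord, h]
  · exact (Finset.mem_filter.mp (Finset.sup_id_mem_of_ne_zero h)).2

theorem length_bord_lt (hw : w ≠ []) : (bord w).length < w.length := by
  have hw : 0 < w.length := List.length_pos_iff.mpr hw
  have hsup : ((Finset.range w.length).filter (fun k => w.take k <:+ w)).sup id < w.length :=
    (Finset.sup_lt_iff hw).mpr fun k hk => Finset.mem_range.mp (Finset.mem_filter.mp hk).1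
  simpa [bord] using hsup

theorem length_le_length_bord (hb : IsBorder b w) : b.length ≤ (bord w).length := by
  obtain ⟨hne, hp, hs⟩ := hb
  have hlt : b.length < w.length :=
    lt_of_le_of_ne hp.length_le fun h => hne (hp.eq_of_length h)
  have hmem : b.length ∈ (Finset.range w.length).filter (fun k => w.take k <:+ w) :=
    Finset.mem_filter.mpr ⟨Finset.mem_range.mpr hlt, List.prefix_iff_eq_take.mp hp ▸ hs⟩
  have := Finset.le_sup (f := id) hmem
  simp only [bord, List.length_take, id] at this ⊢
  omega

/-- The longest border is longer than any closing border, so it has no more occurrences. -/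
theorem countOcc_bord_le_two (hc : IsClosedStr w) (hb : bord w ≠ []) :
    countOcc (bord w) w ≤ 2 := by
  rcases hc with hone | ⟨c, -, hcw, hcount⟩
  · have : (bord w).length < 1 := hone ▸ length_bord_lt (List.ne_nil_of_length_eq_add_one hone)
    exact absurd (List.length_eq_zero_iff.mp (by omega)) hb
  · have hcb : c <+: bord w :=
      List.prefix_of_prefix_length_le hcw.2.1 (bord_prefix w) (length_le_length_bord hcw)
    exact hcount ▸ countOcc_le_of_prefix hcb

end Borders

theorem lrs_suffix (w : List α) : lrs w <:+ w := List.drop_suffix _ _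

theorem two_le_countOcc_lrs {w : List α} (h : lrs w ≠ []) : 2 ≤ countOcc (lrs w) w := by
  set F := (Finset.range (w.length + 1)).filter
    (fun k => 2 ≤ countOcc (w.drop (w.length - k)) w)
  have hsup : F.sup id ≠ 0 := by
    intro h0
    exact h (by simp [lrs, F, h0])
  exact (Finset.mem_filter.mp (Finset.sup_id_mem_of_ne_zero hsup)).2

theorem stmt9_general (S u : List α) (hc : IsClosedStr u) (hb : bord u ≠ [])
    (hu : u <:+ S) (hlen : (lrs S).length < u.length) :
    (lrs (lrs S)).length < (bord u).length := by
  by_contra! hle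
  have hbS : bord u <:+ S := (bord_suffix u).trans hu
  have hLL : lrs (lrs S) <:+ S := (lrs_suffix _).trans (lrs_suffix S)
  have hLL_ne : lrs (lrs S) ≠ [] := by
    intro h
    rw [h, List.length_nil, Nat.le_zero, List.length_eq_zero_iff] at hle
    exact hb hle
  have htwice : 2 ≤ countOcc (bord u) (lrs S) :=
    (two_le_countOcc_lrs hLL_ne).trans
      (countOcc_le_of_suffix (List.suffix_of_suffix_length_le hbS hLL hle))
  obtain ⟨v, rfl⟩ := List.suffix_of_suffix_length_le (lrs_suffix S) hu hlen.le
  have hv : v ≠ [] := by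
    rintro rfl
    simp at hlen
  have := countOcc_lt_countOcc_append hv (bord_prefix (v ++ lrs S))
  have := countOcc_bord_le_two hc hb
  omega

theorem stmt9 (S u : List α) (hc : IsClosedStr u) (hb : bord u ≠ [])
    (hu : u <:+ S) (hlrs : lrs S ≠ []) (hlen : (lrs S).length < u.length) :
    (lrs (lrs S)).length < (bord u).length :=
  stmt9_general S u hc hb hu hlen
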